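/- arXiv:1012.0197 — 2 statements merged into one kernel-verified Lean document; each statement's English description precedes it below -/
import Mathlib

section
/- Consider the missing-data construction: given a biadjacency matrix M_b ∈ {0,1}^{s×t} with Z zero entries enumerated as (i₁,j₁),…,(i_Z,j_Z), define M ∈ ℝ^{(s+Z)×(t+Z)} with upper-left block M_b, lower-right block d·I_Z, and zero blocks elsewhere; define W ∈ {0,1}^{(s+Z)×(t+Z)} with upper-left block all ones, lower-right block I_Z, upper-right block B₁, lower-left block B₂, where B₁(i,k)=1 iff i = i_k and B₂(k,j)=1 iff j = j_k. Then for any d > 1, the infimum p* = inf_{u,v} ‖M − uv^T‖_W² satisfies p* ≤ |E| − |E*|, where |E| is the number of ones in M_b and |E*| the maximum biclique size of M_b. -/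
def IsBiclique {s t : ℕ} (Mb : Matrix (Fin s) (Fin t) ℝ)
    (I : Finset (Fin s)) (J : Finset (Fin t)) : Prop :=
  ∀ i ∈ I, ∀ j ∈ J, Mb i j = 1

/-- Data matrix of the missing-data reduction: upper-left block `Mb`,
lower-right block `d·I_Z`, zero blocks elsewhere. -/
def mdM {s t Z : ℕ} (Mb : Matrix (Fin s) (Fin t) ℝ) (d : ℝ) :
    Matrix (Fin s ⊕ Fin Z) (Fin t ⊕ Fin Z) ℝ :=
  fun x y =>
    match x, y with
    | Sum.inl i, Sum.inl j => Mb i j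
    | Sum.inl _, Sum.inr _ => 0
    | Sum.inr _, Sum.inl _ => 0
    | Sum.inr k, Sum.inr k' => if k = k' then d else 0

/-- Weight matrix of the missing-data reduction: all-ones upper-left block,
identity lower-right block, and pattern blocks `B₁`, `B₂` determined by the
enumeration `e` of the zero entries of `Mb`. -/
def mdW {s t Z : ℕ} (e : Fin Z → Fin s × Fin t) :
    Matrix (Fin s ⊕ Fin Z) (Fin t ⊕ Fin Z) ℝ :=
  fun x y =>
    match x, y with
    | Sum.inl _, Sum.inl _ => 1
    | Sum.inl i, Sum.inr k => if (e k).1 = i then 1 else 0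
    | Sum.inr k, Sum.inl j => if (e k).2 = j then 1 else 0
    | Sum.inr k, Sum.inr k' => if k = k' then 1 else 0

/-!
Take the indicator vectors of a maximum biclique `(I, J)` on the `Mb` rows and columns. The
upper-left block then costs exactly `|E| - |E*|`. For the `k`-th zero entry `(iₖ, jₖ)` pick
`uₖ vₖ = d`, so the diagonal block costs nothing, and make the factor that meets the biclique
small: since `Mb iₖ jₖ = 0`, `iₖ ∈ I` and `jₖ ∈ J` cannot hold together, so `uₖ = c` if
`jₖ ∈ J` and `vₖ = c` otherwise leaves an error of at most `c²` per zero entry. Letting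
`c → 0` gives the bound (the paper takes `c = d^(1-K)` with `K → ∞`).
-/

open Filter Topology

section WeightedError

variable {α β : Type*}

lemma sq_sub_indicator_mul_indicator [DecidableEq α] [DecidableEq β] {M : Matrix α β ℝ}
    (hM : ∀ i j, M i j = 0 ∨ M i j = 1)
    {I : Finset α} {J : Finset β} (hIJ : ∀ i ∈ I, ∀ j ∈ J, M i j = 1) (i : α) (j : β) :
    (M i j - (if i ∈ I then 1 else 0) * (if j ∈ J then 1 else 0)) ^ 2
      = M i j - (if i ∈ I then 1 else 0) * (if j ∈ J then 1 else 0) := by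
  by_cases hi : i ∈ I <;> by_cases hj : j ∈ J
  · simp [hi, hj, hIJ i hi j hj]
  all_goals rcases hM i j with h | h <;> simp [hi, hj, h]

variable [Fintype α] [Fintype β]

def weightedSqError (W M : Matrix α β ℝ) (u : α → ℝ) (v : β → ℝ) : ℝ :=
  ∑ i, ∑ j, W i j * (M i j - u i * v j) ^ 2

lemma weightedSqError_nonneg {W : Matrix α β ℝ} (hW : ∀ i j, 0 ≤ W i j) (M : Matrix α β ℝ)
    (u : α → ℝ) (v : β → ℝ) : 0 ≤ weightedSqError W M u v :=
  Finset.sum_nonneg fun i _ => Finset.sum_nonneg fun j _ => mul_nonneg (hW i j) (sq_nonneg _)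

lemma sInf_weightedSqError_le {W : Matrix α β ℝ} (hW : ∀ i j, 0 ≤ W i j) (M : Matrix α β ℝ)
    (u : α → ℝ) (v : β → ℝ) :
    sInf {x | ∃ u v, x = weightedSqError W M u v} ≤ weightedSqError W M u v :=
  csInf_le ⟨0, by rintro x ⟨u, v, rfl⟩; exact weightedSqError_nonneg hW M u v⟩ ⟨u, v, rfl⟩

lemma sum_sq_sub_indicator_mul_indicator [DecidableEq α] [DecidableEq β] {M : Matrix α β ℝ}
    (hM : ∀ i j, M i j = 0 ∨ M i j = 1)
    {I : Finset α} {J : Finset β} (hIJ : ∀ i ∈ I, ∀ j ∈ J, M i j = 1) :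
    ∑ i, ∑ j, (M i j - (if i ∈ I then 1 else 0) * (if j ∈ J then 1 else 0)) ^ 2
      = ∑ i, ∑ j, M i j - I.card * J.card := by
  simp only [sq_sub_indicator_mul_indicator hM hIJ, Finset.sum_sub_distrib, ← Finset.mul_sum,
    ← Finset.sum_mul, Finset.sum_boole, Finset.filter_mem_eq_inter, Finset.univ_inter]

end WeightedError

section MissingData

variable {s t Z : ℕ}

lemma mdW_nonneg (e : Fin Z → Fin s × Fin t) (x : Fin s ⊕ Fin Z) (y : Fin t ⊕ Fin Z) :
    0 ≤ mdW e x y := by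
  rcases x with i | k <;> rcases y with j | k' <;> simp only [mdW] <;> positivity

lemma weightedSqError_mdW_mdM (Mb : Matrix (Fin s) (Fin t) ℝ) (e : Fin Z → Fin s × Fin t)
    (d : ℝ) (u : Fin s ⊕ Fin Z → ℝ) (v : Fin t ⊕ Fin Z → ℝ) :
    weightedSqError (mdW e) (mdM Mb d) u v
      = ∑ i, ∑ j, (Mb i j - u (.inl i) * v (.inl j)) ^ 2
        + ∑ k, ((u (.inl (e k).1) * v (.inr k)) ^ 2 + (u (.inr k) * v (.inl (e k).2)) ^ 2
          + (d - u (.inr k) * v (.inr k)) ^ 2) := by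
  simp only [weightedSqError, Fintype.sum_sum_type, mdW, mdM, one_mul, ite_mul, zero_mul,
    Finset.sum_ite_eq, Finset.mem_univ, if_true, Finset.sum_add_distrib]
  rw [Finset.sum_comm (f := fun i k => if (e k).1 = i then _ else _)]
  simp only [Finset.sum_ite_eq, Finset.mem_univ, if_true, zero_sub, neg_sq]
  ring

variable (e : Fin Z → Fin s × Fin t) (I : Finset (Fin s)) (J : Finset (Fin t)) (d c : ℝ)

noncomputable def bicliqueLeftFactor : Fin s ⊕ Fin Z → ℝ
  | .inl i => if i ∈ I then 1 else 0
  | .inr k => if (e k).2 ∈ J then c else d / c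

noncomputable def bicliqueRightFactor : Fin t ⊕ Fin Z → ℝ
  | .inl j => if j ∈ J then 1 else 0
  | .inr k => if (e k).2 ∈ J then d / c else c

variable {e I J d c}

lemma bicliqueFactors_zeroEntry_error_le {Mb : Matrix (Fin s) (Fin t) ℝ} (hIJ : IsBiclique Mb I J)
    (hc : c ≠ 0) {k : Fin Z} (hk : Mb (e k).1 (e k).2 = 0) :
    let u := bicliqueLeftFactor e I J d c
    let v := bicliqueRightFactor e J d c
    (u (.inl (e k).1) * v (.inr k)) ^ 2 + (u (.inr k) * v (.inl (e k).2)) ^ 2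
      + (d - u (.inr k) * v (.inr k)) ^ 2 ≤ c ^ 2 := by
  simp only [bicliqueLeftFactor, bicliqueRightFactor]
  by_cases hj : (e k).2 ∈ J
  · have hi : (e k).1 ∉ I := fun hi => by simpa [hk] using hIJ _ hi _ hj
    simp [hi, hj, mul_div_cancel₀ d hc]
  · by_cases hi : (e k).1 ∈ I <;> simp [hi, hj, div_mul_cancel₀ d hc, sq_nonneg]

lemma weightedSqError_bicliqueFactors_le {Mb : Matrix (Fin s) (Fin t) ℝ}
    (hMb : ∀ i j, Mb i j = 0 ∨ Mb i j = 1) (hIJ : IsBiclique Mb I J)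
    (he : ∀ k, Mb (e k).1 (e k).2 = 0) (hc : c ≠ 0) :
    weightedSqError (mdW e) (mdM Mb d) (bicliqueLeftFactor e I J d c)
        (bicliqueRightFactor e J d c)
      ≤ ∑ i, ∑ j, Mb i j - I.card * J.card + Z * c ^ 2 := by
  rw [weightedSqError_mdW_mdM]
  gcongr
  · exact (sum_sq_sub_indicator_mul_indicator hMb hIJ).le
  · calc _ ≤ ∑ _k : Fin Z, c ^ 2 :=
          Finset.sum_le_sum fun k _ => bicliqueFactors_zeroEntry_error_le hIJ hc (he k)
      _ = Z * c ^ 2 := by simp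

end MissingData

theorem stmt_13_general {s t Z : ℕ} (Mb : Matrix (Fin s) (Fin t) ℝ)
    (hMb : ∀ i j, Mb i j = 0 ∨ Mb i j = 1)
    (e : Fin Z → Fin s × Fin t)
    (he_enum : ∀ p : Fin s × Fin t, Mb p.1 p.2 = 0 ↔ p ∈ Set.range e)
    (E : ℝ) (hE : E = ∑ i, ∑ j, Mb i j)
    (Estar : ℕ)
    (hEstar_ex : ∃ (I : Finset (Fin s)) (J : Finset (Fin t)),
      IsBiclique Mb I J ∧ I.card * J.card = Estar)
    (d : ℝ) :
    sInf {x : ℝ | ∃ (u : Fin s ⊕ Fin Z → ℝ) (v : Fin t ⊕ Fin Z → ℝ),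
        x = ∑ i, ∑ j, mdW e i j * (mdM Mb d i j - u i * v j) ^ 2} ≤
      E - Estar := by
  obtain ⟨I, J, hIJ, rfl⟩ := hEstar_ex
  have he : ∀ k, Mb (e k).1 (e k).2 = 0 := fun k => (he_enum (e k)).2 ⟨k, rfl⟩
  have hlim : Tendsto (fun c : ℝ => E - (I.card * J.card : ℕ) + Z * c ^ 2) (𝓝[≠] 0)
      (𝓝 (E - (I.card * J.card : ℕ))) := by
    have hcont : Continuous fun c : ℝ => E - (I.card * J.card : ℕ) + Z * c ^ 2 := by fun_prop
    simpa using hcont.tendsto 0 |>.mono_left nhdsWithin_le_nhds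
  refine ge_of_tendsto hlim ?_
  filter_upwards [self_mem_nhdsWithin] with c hc
  calc _ ≤ weightedSqError (mdW e) (mdM Mb d) (bicliqueLeftFactor e I J d c)
          (bicliqueRightFactor e J d c) := sInf_weightedSqError_le (mdW_nonneg e) _ _ _
    _ ≤ _ := by
      push_cast
      exact hE ▸ weightedSqError_bicliqueFactors_le hMb hIJ he hc

theorem stmt_13 {s t Z : ℕ} (Mb : Matrix (Fin s) (Fin t) ℝ)
    (hMb : ∀ i j, Mb i j = 0 ∨ Mb i j = 1)
    (e : Fin Z → Fin s × Fin t) (he_inj : Function.Injective e)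
    (he_enum : ∀ p : Fin s × Fin t, Mb p.1 p.2 = 0 ↔ p ∈ Set.range e)
    (E : ℝ) (hE : E = ∑ i, ∑ j, Mb i j)
    (Estar : ℕ)
    (hEstar_ex : ∃ (I : Finset (Fin s)) (J : Finset (Fin t)),
      IsBiclique Mb I J ∧ I.card * J.card = Estar)
    (hEstar_max : ∀ (I : Finset (Fin s)) (J : Finset (Fin t)),
      IsBiclique Mb I J → I.card * J.card ≤ Estar)
    (d : ℝ) (hd : 1 < d) :
    sInf {x : ℝ | ∃ (u : Fin s ⊕ Fin Z → ℝ) (v : Fin t ⊕ Fin Z → ℝ),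
        x = ∑ i, ∑ j, mdW e i j * (mdM Mb d i j - u i * v j) ^ 2} ≤
      E - Estar :=
  stmt_13_general Mb hMb e he_enum E hE Estar hEstar_ex d
end

section
/- In the missing-data construction with M_b ∈ {0,1}^{s×t} having |E| ≥ 1 ones and maximum biclique size |E*|, for any 0 < ε ≤ 1 and any d > 8|E|^{7/2}/ε² + |E|^{1/2}, the infimum p* = inf_{u,v} ‖M − uv^T‖_W² satisfies |E| − |E*| − ε < p* ≤ |E| − |E*|. -/
/-!
The upper bound fits the top-left block by `1_I 1_Jᵀ` for a maximum biclique `I × J`, at cost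
`|E| - |E*|`, and realises each `d`-entry as `c * (d / c)` with `c → 0`, so the linking blocks
cost at most `Z c²`.

For the lower bound, a fit of loss below `|E|` has all top-left entries `|u_i v_j| ≤ 2√|E|`.
At a zero `(i, j) = e k`, writing `u'_k = u (.inr k)` and `v'_k = v (.inr k)`, the identity
`(u_i v_j)(u'_k v'_k) = (u_i v'_k)(u'_k v_j)` with `u'_k v'_k ≈ d` gives
`|u_i v_j| ≤ |E| / (d - √|E|)`. The entries exceeding `β`, where
`β² = 2√|E| · |E| / (d - √|E|)`, then span a biclique: if `u_i v_j'` and `u_i' v_j` exceed `β`,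
then `(u_i v_j)(u_i' v_j') > β²`, which a zero at `(i, j)` forbids. Hence at most `|E*|` ones are
fitted by values above `β`, each other one costs at least `1 - 2β`, and `2β|E| < ε` by the choice
of `d`.
-/

open Finset

theorem abs_mul_le_div_of_sq_lt {a b x y d q : ℝ} (hq : 0 ≤ q) (hqd : q < d)
    (hay : (a * y) ^ 2 < q ^ 2) (hxb : (x * b) ^ 2 < q ^ 2) (hxy : (d - x * y) ^ 2 < q ^ 2) :
    |a * b| ≤ q ^ 2 / (d - q) := by
  have hxy_pos : d - q < x * y := by linarith [(abs_lt_of_sq_lt_sq' hxy hq).2]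
  rw [le_div_iff₀ (by linarith)]
  calc |a * b| * (d - q) ≤ |a * b| * |x * y| := by gcongr; exact hxy_pos.le.trans (le_abs_self _)
    _ = |a * y| * |x * b| := by rw [← abs_mul, ← abs_mul]; ring_nf
    _ ≤ q * q := by
      gcongr
      exacts [(abs_lt_of_sq_lt_sq hay hq).le, (abs_lt_of_sq_lt_sq hxb hq).le]
    _ = q ^ 2 := (sq q).symm

theorem sum_sum_ite_mul_ite {α β R : Type*} [Fintype α] [Fintype β] [DecidableEq α] [DecidableEq β]
    [CommSemiring R]
    (I : Finset α) (J : Finset β) :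
    ∑ i, ∑ j, (if i ∈ I then (1 : R) else 0) * (if j ∈ J then 1 else 0) = #I * #J := by
  rw [← sum_mul_sum]
  simp

section Biclique

variable {s t : ℕ} {Mb : Matrix (Fin s) (Fin t) ℝ}

theorem isBiclique_of_abs_mul_le (U : Fin s → ℝ) (V : Fin t → ℝ) {K β : ℝ} (hβ : 0 ≤ β)
    (hK : ∀ i j, |U i * V j| ≤ K) (hsmall : ∀ i j, Mb i j ≠ 1 → |U i * V j| * K ≤ β ^ 2) :
    IsBiclique Mb {i | ∃ j, β < U i * V j} {j | ∃ i, β < U i * V j} := by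
  intro i hi j hj
  obtain ⟨j', hij'⟩ := (mem_filter.1 hi).2
  obtain ⟨i', hi'j⟩ := (mem_filter.1 hj).2
  by_contra hne
  have hprod : β ^ 2 < |U i * V j| * |U i' * V j'| := calc
    β ^ 2 < (U i * V j') * (U i' * V j) := by nlinarith
    _ = (U i * V j) * (U i' * V j') := by ring
    _ ≤ |U i * V j| * |U i' * V j'| := by rw [← abs_mul]; exact le_abs_self _
  nlinarith [hsmall i j hne, hK i' j', abs_nonneg (U i * V j)]

theorem sum_sub_le_sum_sq_sub_mul (hMb : ∀ i j, Mb i j = 0 ∨ Mb i j = 1) {Estar : ℕ}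
    (hEstar_max : ∀ I J, IsBiclique Mb I J → #I * #J ≤ Estar)
    (U : Fin s → ℝ) (V : Fin t → ℝ) {K β : ℝ} (hβ : 0 ≤ β)
    (hK : ∀ i j, |U i * V j| ≤ K) (hsmall : ∀ i j, Mb i j ≠ 1 → |U i * V j| * K ≤ β ^ 2) :
    ∑ i, ∑ j, Mb i j - Estar - 2 * β * ∑ i, ∑ j, Mb i j ≤
      ∑ i, ∑ j, (Mb i j - U i * V j) ^ 2 := by
  set R : Finset (Fin s) := {i | ∃ j, β < U i * V j}
  set C : Finset (Fin t) := {j | ∃ i, β < U i * V j}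
  have hRC : (#R * #C : ℝ) ≤ Estar :=
    mod_cast hEstar_max R C (isBiclique_of_abs_mul_le U V hβ hK hsmall)
  -- An entry of value `1` fitted by `x ≤ β` costs `(1 - x) ^ 2 ≥ 1 - 2β`.
  have hentry : ∀ i j, Mb i j - (if i ∈ R then 1 else 0) * (if j ∈ C then 1 else 0) -
      2 * β * Mb i j ≤ (Mb i j - U i * V j) ^ 2 := by
    intro i j
    by_cases hx : β < U i * V j
    · have hi : i ∈ R := mem_filter.2 ⟨mem_univ _, j, hx⟩
      have hj : j ∈ C := mem_filter.2 ⟨mem_univ _, i, hx⟩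
      rcases hMb i j with h | h <;> simp only [h, hi, hj, if_true] <;> nlinarith
    · rcases hMb i j with h | h <;> rw [h] <;> split_ifs <;> nlinarith
  calc ∑ i, ∑ j, Mb i j - Estar - 2 * β * ∑ i, ∑ j, Mb i j
      ≤ ∑ i, ∑ j, Mb i j - #R * #C - 2 * β * ∑ i, ∑ j, Mb i j := by linarith
    _ = ∑ i, ∑ j, (Mb i j - (if i ∈ R then 1 else 0) * (if j ∈ C then 1 else 0) -
          2 * β * Mb i j) := by
      rw [← sum_sum_ite_mul_ite R C]
      simp only [sum_sub_distrib, mul_sum]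
    _ ≤ ∑ i, ∑ j, (Mb i j - U i * V j) ^ 2 := sum_le_sum fun i _ => sum_le_sum fun j _ => hentry i j

end Biclique

section MissingData

variable {s t Z : ℕ}

/-- The weighted objective `‖M - u vᵀ‖²_W` of the missing-data reduction. -/
def mdLoss (Mb : Matrix (Fin s) (Fin t) ℝ) (d : ℝ) (e : Fin Z → Fin s × Fin t)
    (u : Fin s ⊕ Fin Z → ℝ) (v : Fin t ⊕ Fin Z → ℝ) : ℝ :=
  ∑ i, ∑ j, mdW e i j * (mdM Mb d i j - u i * v j) ^ 2

theorem mdLoss_eq (Mb : Matrix (Fin s) (Fin t) ℝ) (d : ℝ) (e : Fin Z → Fin s × Fin t)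
    (u : Fin s ⊕ Fin Z → ℝ) (v : Fin t ⊕ Fin Z → ℝ) :
    mdLoss Mb d e u v =
      ∑ i, ∑ j, (Mb i j - u (.inl i) * v (.inl j)) ^ 2 +
        ∑ k, ((u (.inl (e k).1) * v (.inr k)) ^ 2 + (u (.inr k) * v (.inl (e k).2)) ^ 2 +
          (d - u (.inr k) * v (.inr k)) ^ 2) := by
  simp only [mdLoss, Fintype.sum_sum_type, mdW, mdM]
  simp only [ite_mul, one_mul, zero_mul, zero_sub, neg_sq, sum_ite_eq, mem_univ, if_true,
    sum_add_distrib]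
  rw [sum_comm (s := univ) (t := univ) (f := fun i k => if (e k).1 = i then _ else 0)]
  simp only [sum_ite_eq, mem_univ, if_true]
  ring

theorem mdLoss_nonneg (Mb : Matrix (Fin s) (Fin t) ℝ) (d : ℝ) (e : Fin Z → Fin s × Fin t)
    (u : Fin s ⊕ Fin Z → ℝ) (v : Fin t ⊕ Fin Z → ℝ) : 0 ≤ mdLoss Mb d e u v := by
  rw [mdLoss_eq]
  positivity

variable {Mb : Matrix (Fin s) (Fin t) ℝ} {e : Fin Z → Fin s × Fin t}

theorem abs_mul_le_of_mdLoss_lt (hMb : ∀ i j, Mb i j = 0 ∨ Mb i j = 1)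
    (he_enum : ∀ p : Fin s × Fin t, Mb p.1 p.2 = 0 ↔ p ∈ Set.range e) {q d : ℝ}
    (hq : 1 ≤ q) (hqd : q < d) {u : Fin s ⊕ Fin Z → ℝ} {v : Fin t ⊕ Fin Z → ℝ}
    (hloss : mdLoss Mb d e u v < q ^ 2) :
    (∀ i j, |u (.inl i) * v (.inl j)| ≤ 2 * q) ∧
      ∀ i j, Mb i j = 0 → |u (.inl i) * v (.inl j)| ≤ q ^ 2 / (d - q) := by
  rw [mdLoss_eq] at hloss
  have hA : ∀ i j, (Mb i j - u (.inl i) * v (.inl j)) ^ 2 < q ^ 2 := fun i j => by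
    refine lt_of_le_of_lt ?_ (lt_of_le_of_lt (le_add_of_nonneg_right ?_) hloss)
    · exact (single_le_sum (f := fun j => (Mb i j - u (.inl i) * v (.inl j)) ^ 2)
        (fun _ _ => sq_nonneg _) (mem_univ j)).trans
        (single_le_sum (f := fun i => ∑ j, (Mb i j - u (.inl i) * v (.inl j)) ^ 2)
          (fun _ _ => sum_nonneg fun _ _ => sq_nonneg _) (mem_univ i))
    · positivity
  have hT : ∀ k, (u (.inl (e k).1) * v (.inr k)) ^ 2 + (u (.inr k) * v (.inl (e k).2)) ^ 2 +
      (d - u (.inr k) * v (.inr k)) ^ 2 < q ^ 2 := fun k => by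
    refine lt_of_le_of_lt ?_ (lt_of_le_of_lt (le_add_of_nonneg_left ?_) hloss)
    · exact single_le_sum (f := fun k => (u (.inl (e k).1) * v (.inr k)) ^ 2 +
        (u (.inr k) * v (.inl (e k).2)) ^ 2 + (d - u (.inr k) * v (.inr k)) ^ 2)
        (fun _ _ => by positivity) (mem_univ k)
    · positivity
  refine ⟨fun i j => ?_, fun i j hij => ?_⟩
  · obtain ⟨hlo, hhi⟩ := abs_lt_of_sq_lt_sq' (hA i j) (by linarith)
    rw [abs_le]
    rcases hMb i j with h | h <;> rw [h] at hlo hhi <;> constructor <;> linarith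
  · obtain ⟨k, hk⟩ := (he_enum (i, j)).1 hij
    have hTk := hT k
    simp only [hk] at hTk
    have := sq_nonneg (u (.inl i) * v (.inr k))
    have := sq_nonneg (u (.inr k) * v (.inl j))
    have := sq_nonneg (d - u (.inr k) * v (.inr k))
    exact abs_mul_le_div_of_sq_lt (x := u (.inr k)) (y := v (.inr k)) (by linarith) hqd
      (by linarith) (by linarith) (by linarith)

theorem sum_sub_le_mdLoss (hMb : ∀ i j, Mb i j = 0 ∨ Mb i j = 1)
    (he_enum : ∀ p : Fin s × Fin t, Mb p.1 p.2 = 0 ↔ p ∈ Set.range e) {Estar : ℕ}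
    (hEstar_max : ∀ I J, IsBiclique Mb I J → #I * #J ≤ Estar) {q d : ℝ} (hq : 1 ≤ q)
    (hqd : q < d) (hE : ∑ i, ∑ j, Mb i j ≤ q ^ 2) (u : Fin s ⊕ Fin Z → ℝ)
    (v : Fin t ⊕ Fin Z → ℝ) :
    ∑ i, ∑ j, Mb i j - Estar - 2 * √(2 * q ^ 3 / (d - q)) * ∑ i, ∑ j, Mb i j ≤
      mdLoss Mb d e u v := by
  set β := √(2 * q ^ 3 / (d - q))
  have hE0 : 0 ≤ ∑ i, ∑ j, Mb i j :=
    sum_nonneg fun i _ => sum_nonneg fun j _ => by rcases hMb i j with h | h <;> simp [h]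
  by_cases hloss : mdLoss Mb d e u v < q ^ 2
  · obtain ⟨hK, hzero⟩ := abs_mul_le_of_mdLoss_lt hMb he_enum hq hqd hloss
    have hβsq : β ^ 2 = q ^ 2 / (d - q) * (2 * q) := by
      rw [Real.sq_sqrt (by have := sub_pos.2 hqd; positivity)]
      ring
    have hsmall : ∀ i j, Mb i j ≠ 1 → |u (.inl i) * v (.inl j)| * (2 * q) ≤ β ^ 2 :=
      fun i j hij => hβsq ▸ mul_le_mul_of_nonneg_right
        (hzero i j ((hMb i j).resolve_right hij)) (by linarith)
    calc _ ≤ ∑ i, ∑ j, (Mb i j - u (.inl i) * v (.inl j)) ^ 2 :=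
          sum_sub_le_sum_sq_sub_mul hMb hEstar_max _ _ (Real.sqrt_nonneg _) hK hsmall
      _ ≤ mdLoss Mb d e u v := by
          rw [mdLoss_eq]
          exact le_add_of_nonneg_right (by positivity)
  · have := mul_nonneg (Real.sqrt_nonneg (2 * q ^ 3 / (d - q))) hE0
    have := Nat.cast_nonneg (α := ℝ) Estar
    linarith

theorem exists_mdLoss_le (hMb : ∀ i j, Mb i j = 0 ∨ Mb i j = 1)
    (hzero : ∀ k, Mb (e k).1 (e k).2 = 0) {I : Finset (Fin s)} {J : Finset (Fin t)}
    (hIJ : IsBiclique Mb I J) (d : ℝ) {c : ℝ} (hc : c ≠ 0) :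
    ∃ u v, mdLoss Mb d e u v ≤ ∑ i, ∑ j, Mb i j - #I * #J + Z * c ^ 2 := by
  -- A zero `e k` with column in `J` has its row outside `I`, so `u'_k` may carry the small factor.
  refine ⟨Sum.elim (fun i => if i ∈ I then 1 else 0) (fun k => if (e k).2 ∈ J then c else d / c),
    Sum.elim (fun j => if j ∈ J then 1 else 0) (fun k => if (e k).2 ∈ J then d / c else c), ?_⟩
  have htop : ∀ i j, (Mb i j - (if i ∈ I then 1 else 0) * (if j ∈ J then 1 else 0)) ^ 2 =
      Mb i j - (if i ∈ I then 1 else 0) * (if j ∈ J then 1 else 0) := fun i j => by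
    by_cases hi : i ∈ I <;> by_cases hj : j ∈ J <;> simp only [hi, hj, if_true, if_false]
    · simp [hIJ i hi j hj]
    all_goals rcases hMb i j with h | h <;> simp [h]
  have hzero_block : ∀ k, ((if (e k).1 ∈ I then 1 else 0) * (if (e k).2 ∈ J then d / c else c)) ^ 2
      + ((if (e k).2 ∈ J then c else d / c) * (if (e k).2 ∈ J then 1 else 0)) ^ 2
      + (d - (if (e k).2 ∈ J then c else d / c) * (if (e k).2 ∈ J then d / c else c)) ^ 2
      ≤ c ^ 2 := fun k => by
    by_cases hJ : (e k).2 ∈ J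
    · have hI : (e k).1 ∉ I := fun hI => by simpa [hzero k] using hIJ _ hI _ hJ
      simp [hI, hJ, mul_div_cancel₀ d hc]
    · by_cases hI : (e k).1 ∈ I <;> simp [hI, hJ, div_mul_cancel₀ d hc, sq_nonneg]
  rw [mdLoss_eq]
  simp only [Sum.elim_inl, Sum.elim_inr, htop]
  calc _ ≤ ∑ i, ∑ j, (Mb i j - (if i ∈ I then 1 else 0) * (if j ∈ J then 1 else 0)) +
        ∑ _k : Fin Z, c ^ 2 := add_le_add_right (sum_le_sum fun k _ => hzero_block k) _
    _ = ∑ i, ∑ j, Mb i j - #I * #J + Z * c ^ 2 := by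
        simp only [sum_sub_distrib, sum_sum_ite_mul_ite, sum_const, card_univ, Fintype.card_fin,
          nsmul_eq_mul]

theorem le_sInf_mdLoss (hMb : ∀ i j, Mb i j = 0 ∨ Mb i j = 1)
    (he_enum : ∀ p : Fin s × Fin t, Mb p.1 p.2 = 0 ↔ p ∈ Set.range e) {Estar : ℕ}
    (hEstar_max : ∀ I J, IsBiclique Mb I J → #I * #J ≤ Estar) {q d : ℝ} (hq : 1 ≤ q)
    (hqd : q < d) (hE : ∑ i, ∑ j, Mb i j ≤ q ^ 2) :
    ∑ i, ∑ j, Mb i j - Estar - 2 * √(2 * q ^ 3 / (d - q)) * ∑ i, ∑ j, Mb i j ≤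
      sInf {x | ∃ u v, x = mdLoss Mb d e u v} := by
  refine le_csInf ⟨_, 0, 0, rfl⟩ ?_
  rintro _ ⟨u, v, rfl⟩
  exact sum_sub_le_mdLoss hMb he_enum hEstar_max hq hqd hE u v

theorem sInf_mdLoss_le (hMb : ∀ i j, Mb i j = 0 ∨ Mb i j = 1)
    (hzero : ∀ k, Mb (e k).1 (e k).2 = 0) {I : Finset (Fin s)} {J : Finset (Fin t)}
    (hIJ : IsBiclique Mb I J) (d : ℝ) :
    sInf {x | ∃ u v, x = mdLoss Mb d e u v} ≤ ∑ i, ∑ j, Mb i j - #I * #J := by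
  refine le_of_forall_pos_le_add fun η hη => ?_
  obtain ⟨u, v, huv⟩ := exists_mdLoss_le hMb hzero hIJ d
    (Real.sqrt_pos.2 (by positivity : 0 < η / (Z + 1))).ne'
  have hZη : Z * √(η / (Z + 1)) ^ 2 ≤ η := by
    rw [Real.sq_sqrt (by positivity), mul_div_assoc', div_le_iff₀ (by positivity)]
    linarith
  refine csInf_le_of_le ⟨0, ?_⟩ ⟨u, v, rfl⟩ (by linarith)
  rintro _ ⟨u, v, rfl⟩
  exact mdLoss_nonneg Mb d e u v

end MissingData

theorem two_mul_sqrt_mul_sq_lt {q d ε : ℝ} (hq : 0 ≤ q) (hε : 0 < ε)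
    (hd : 8 * q ^ 7 / ε ^ 2 + q < d) :
    2 * √(2 * q ^ 3 / (d - q)) * q ^ 2 < ε := by
  have hdq : 0 < d - q := by linarith [div_nonneg (by positivity : (0 : ℝ) ≤ 8 * q ^ 7) (sq_nonneg ε)]
  have hsq : (2 * √(2 * q ^ 3 / (d - q)) * q ^ 2) ^ 2 = 8 * q ^ 7 / (d - q) := by
    rw [mul_pow, mul_pow, Real.sq_sqrt (by positivity)]
    field_simp
    ring
  refine lt_of_pow_lt_pow_left₀ 2 hε.le (hsq ▸ (div_lt_iff₀ hdq).2 ?_)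
  have := (div_lt_iff₀ (by positivity)).1 (lt_sub_iff_add_lt.2 hd)
  linarith

theorem stmt_15_general {s t Z : ℕ} (Mb : Matrix (Fin s) (Fin t) ℝ)
    (hMb : ∀ i j, Mb i j = 0 ∨ Mb i j = 1)
    (e : Fin Z → Fin s × Fin t)
    (he_enum : ∀ p : Fin s × Fin t, Mb p.1 p.2 = 0 ↔ p ∈ Set.range e)
    (E : ℝ) (hE : E = ∑ i, ∑ j, Mb i j) (hE1 : 1 ≤ E)
    (Estar : ℕ)
    (hEstar_ex : ∃ (I : Finset (Fin s)) (J : Finset (Fin t)),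
      IsBiclique Mb I J ∧ I.card * J.card = Estar)
    (hEstar_max : ∀ (I : Finset (Fin s)) (J : Finset (Fin t)),
      IsBiclique Mb I J → I.card * J.card ≤ Estar)
    (ε : ℝ) (hε0 : 0 < ε)
    (d : ℝ) (hd : 8 * E ^ ((7 : ℝ) / 2) / ε ^ 2 + E ^ ((1 : ℝ) / 2) < d) :
    E - Estar - ε <
        sInf {x : ℝ | ∃ (u : Fin s ⊕ Fin Z → ℝ) (v : Fin t ⊕ Fin Z → ℝ),
          x = ∑ i, ∑ j, mdW e i j * (mdM Mb d i j - u i * v j) ^ 2} ∧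
      sInf {x : ℝ | ∃ (u : Fin s ⊕ Fin Z → ℝ) (v : Fin t ⊕ Fin Z → ℝ),
          x = ∑ i, ∑ j, mdW e i j * (mdM Mb d i j - u i * v j) ^ 2} ≤
        E - Estar := by
  rw [Real.rpow_div_two_eq_sqrt _ (by linarith), Real.rpow_div_two_eq_sqrt _ (by linarith),
    Real.rpow_one, Real.rpow_ofNat] at hd
  set q := √E
  have hqE : q ^ 2 = E := Real.sq_sqrt (by linarith)
  have hq : 1 ≤ q := Real.one_le_sqrt.2 hE1
  have hqd : q < d := by linarith [div_nonneg (by positivity : (0 : ℝ) ≤ 8 * q ^ 7) (sq_nonneg ε)]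
  have hβ := two_mul_sqrt_mul_sq_lt (by linarith) hε0 hd
  obtain ⟨I, J, hIJ, rfl⟩ := hEstar_ex
  have hlower := le_sInf_mdLoss (e := e) hMb he_enum hEstar_max hq hqd (hE ▸ hqE.ge)
  have hupper := sInf_mdLoss_le hMb (fun k => (he_enum (e k)).2 ⟨k, rfl⟩) hIJ d
  rw [← hE] at hlower hupper
  rw [hqE] at hβ
  unfold mdLoss at hlower hupper
  push_cast at hlower ⊢
  exact ⟨by linarith, hupper⟩

theorem stmt_15 {s t Z : ℕ} (Mb : Matrix (Fin s) (Fin t) ℝ)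
    (hMb : ∀ i j, Mb i j = 0 ∨ Mb i j = 1)
    (e : Fin Z → Fin s × Fin t) (he_inj : Function.Injective e)
    (he_enum : ∀ p : Fin s × Fin t, Mb p.1 p.2 = 0 ↔ p ∈ Set.range e)
    (E : ℝ) (hE : E = ∑ i, ∑ j, Mb i j) (hE1 : 1 ≤ E)
    (Estar : ℕ)
    (hEstar_ex : ∃ (I : Finset (Fin s)) (J : Finset (Fin t)),
      IsBiclique Mb I J ∧ I.card * J.card = Estar)
    (hEstar_max : ∀ (I : Finset (Fin s)) (J : Finset (Fin t)),
      IsBiclique Mb I J → I.card * J.card ≤ Estar)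
    (ε : ℝ) (hε0 : 0 < ε) (hε1 : ε ≤ 1)
    (d : ℝ) (hd : 8 * E ^ ((7 : ℝ) / 2) / ε ^ 2 + E ^ ((1 : ℝ) / 2) < d) :
    E - Estar - ε <
        sInf {x : ℝ | ∃ (u : Fin s ⊕ Fin Z → ℝ) (v : Fin t ⊕ Fin Z → ℝ),
          x = ∑ i, ∑ j, mdW e i j * (mdM Mb d i j - u i * v j) ^ 2} ∧
      sInf {x : ℝ | ∃ (u : Fin s ⊕ Fin Z → ℝ) (v : Fin t ⊕ Fin Z → ℝ),
          x = ∑ i, ∑ j, mdW e i j * (mdM Mb d i j - u i * v j) ^ 2} ≤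
        E - Estar :=
  stmt_15_general Mb hMb e he_enum E hE hE1 Estar hEstar_ex hEstar_max ε hε0 d hd
end
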